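/- arXiv:1912.08763 — 4 statements merged into one kernel-verified Lean document; each statement's English description precedes it below -/
import Mathlib

section
/- Let 1 ≤ l ≤ d and 1 ≤ l' ≤ d' be integers, and let q ≥ 1 and 0 ≤ r ≤ d−1 be the unique integers with d' = q·d − r. If q·l − min(l,r) ≥ l', then (l,d) dominates (l',d'): for every finite set X with a monotone total preorder ⪰ on its subsets, MMS(X,l,d) ⪰ MMS(X,l',d'). -/
/-!
Merge the `d' = q d - r` parts of a `d'`-partition into `d` bundles by sending part `j` to bundle
`j mod d`: every bundle gets `q` parts, except the `r` residues of `d', …, q d - 1`, which get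
`q - 1`. Since those `r` residues are distinct, any `l` bundles contain at least
`q l - min l r ≥ l'` of the original parts, so by monotonicity each union of `l` bundles is
`⪰` some union of `l'` original parts.
-/

open Finset

/-- A partition of the finite type `α` into `d` (possibly empty) pairwise-disjoint parts. -/
def IsPartition {α : Type} [Fintype α] [DecidableEq α] (d : ℕ) (Y : Fin d → Finset α) : Prop :=
  (∀ i j : Fin d, i ≠ j → Disjoint (Y i) (Y j)) ∧
    Finset.univ.biUnion Y = (Finset.univ : Finset α)

/-- `MMSLe pref l d l' d'` says that the `l`-out-of-`d` maximin share of `α` is at least as good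
(w.r.t. `pref`, where `pref A B` means `A ⪰ B`) as the `l'`-out-of-`d'` maximin share:
for every `d'`-partition `Y'` there is a `d`-partition `Y` whose minimal `l`-part union is
`⪰` some `l'`-part union of `Y'` (hence `⪰` the minimal one). -/
def MMSLe {α : Type} [Fintype α] [DecidableEq α]
    (pref : Finset α → Finset α → Prop) (l d l' d' : ℕ) : Prop :=
  ∀ Y' : Fin d' → Finset α, IsPartition d' Y' →
    ∃ Y : Fin d → Finset α, IsPartition d Y ∧
      ∀ S : Finset (Fin d), S.card = l →
        ∃ S' : Finset (Fin d'), S'.card = l' ∧ pref (S.biUnion Y) (S'.biUnion Y')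

namespace Nat

theorem card_filter_range_mul_mod_mem {d : ℕ} (hd : 0 < d) (q : ℕ) {S : Finset ℕ}
    (hS : S ⊆ range d) : #{k ∈ range (q * d) | k % d ∈ S} = q * #S := by
  rw [card_eq_sum_card_fiberwise (f := (· % d)) (t := S) fun k hk => by simp_all,
    sum_const_nat (m := q), mul_comm]
  intro i hi
  have hcount := count_modEq_card (q * d) hd i
  rw [count_eq_card_filter_range, mul_div_cancel_right₀ _ hd.ne', mul_mod_left,
    if_neg (Nat.not_lt_zero _), add_zero] at hcount
  rw [filter_filter]
  convert hcount using 2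
  ext k
  simp only [mem_filter, ModEq, mod_eq_of_lt (mem_range.mp (hS hi))]
  exact ⟨fun h => ⟨h.1, h.2.2⟩, fun h => ⟨h.1, h.2 ▸ hi, h.2⟩⟩

theorem mul_card_le_card_filter_range_mod_mem_add_min {d d' q r : ℕ} (hrd : r ≤ d)
    (hqd : d' + r = q * d) {S : Finset ℕ} (hS : S ⊆ range d) :
    q * #S ≤ #{k ∈ range d' | k % d ∈ S} + min #S r := by
  rcases d.eq_zero_or_pos with rfl | hd
  · simp_all
  set tail := {k ∈ Ico d' (d' + r) | k % d ∈ S}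
  have htail : #tail ≤ min #S r := by
    refine le_min (card_le_card_of_injOn (· % d) (fun k hk => (mem_filter.mp hk).2) ?_) ?_
    · exact ((mod_injOn_Ico d' d).mono (Ico_subset_Ico_right (by omega))).mono
        (filter_subset _ _)
    · exact (card_filter_le _ _).trans (by simp)
  calc q * #S = #{k ∈ range (q * d) | k % d ∈ S} := (card_filter_range_mul_mod_mem hd q hS).symm
    _ ≤ #{k ∈ range d' | k % d ∈ S} + #tail := by
      rw [← hqd, range_eq_Ico, ← Ico_union_Ico_eq_Ico (zero_le d') (le_add_right d' r),
        filter_union, Ico_zero_eq_range]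
      exact card_union_le _ _
    _ ≤ _ := by gcongr

end Nat

section MergeParts

variable {α : Type} [DecidableEq α] {d d' : ℕ}

def mergeParts (g : Fin d' → Fin d) (Y' : Fin d' → Finset α) (i : Fin d) : Finset α :=
  ({j | g j = i} : Finset (Fin d')).biUnion Y'

theorem IsPartition.mergeParts [Fintype α] {Y' : Fin d' → Finset α} (hY' : IsPartition d' Y')
    (g : Fin d' → Fin d) : IsPartition d (mergeParts g Y') := by
  refine ⟨fun i i' hii' => ?_, eq_univ_of_forall fun a => ?_⟩
  · simp only [_root_.mergeParts, disjoint_biUnion_left, disjoint_biUnion_right, mem_filter,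
      mem_univ, true_and]
    rintro j rfl j' rfl
    exact hY'.1 j' j (by rintro rfl; exact hii' rfl)
  · obtain ⟨j, -, hj⟩ := mem_biUnion.mp (hY'.2 ▸ mem_univ a)
    exact mem_biUnion.mpr ⟨g j, mem_univ _, mem_biUnion.mpr ⟨j, by simp, hj⟩⟩

theorem biUnion_mergeParts (g : Fin d' → Fin d) (Y' : Fin d' → Finset α) (S : Finset (Fin d)) :
    S.biUnion (mergeParts g Y') = ({j | g j ∈ S} : Finset (Fin d')).biUnion Y' := by
  ext a
  simp [mergeParts]

theorem mmsLe_of_le_card_preimage [Fintype α] {pref : Finset α → Finset α → Prop}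
    (hmono : ∀ A B : Finset α, B ⊆ A → pref A B) {l l' : ℕ} (g : Fin d' → Fin d)
    (hg : ∀ S : Finset (Fin d), #S = l → l' ≤ #{j | g j ∈ S}) : MMSLe pref l d l' d' := by
  intro Y' hY'
  refine ⟨mergeParts g Y', hY'.mergeParts g, fun S hS => ?_⟩
  obtain ⟨S', hS'S, hS'⟩ := exists_subset_card_eq (hg S hS)
  refine ⟨S', hS', hmono _ _ ?_⟩
  rw [biUnion_mergeParts]
  exact biUnion_subset_biUnion_of_subset_left Y' hS'S

end MergeParts

theorem exists_fin_map_mul_card_le_card_preimage_add_min {d d' q r : ℕ} (hr : r < d)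
    (hqd : d' + r = q * d) :
    ∃ g : Fin d' → Fin d, ∀ S : Finset (Fin d), q * #S ≤ #{j | g j ∈ S} + min #S r := by
  refine ⟨fun j => ⟨j % d, Nat.mod_lt _ (by omega)⟩, fun S => ?_⟩
  have h := Nat.mul_card_le_card_filter_range_mod_mem_add_min hr.le hqd
    (S := S.map Fin.valEmbedding) (by simp [subset_iff])
  rw [card_map, ← Nat.Iio_eq_range, ← Fin.map_valEmbedding_univ, filter_map, card_map] at h
  convert h using 4 with j
  simp only [Function.comp_apply, Fin.valEmbedding_apply, mem_map]
  exact ⟨fun hj => ⟨_, hj, rfl⟩, fun ⟨i, hi, hij⟩ => (Fin.ext hij : i = ⟨j % d, _⟩) ▸ hi⟩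

theorem stmt1_general {α : Type} [Fintype α] [DecidableEq α]
    (l d l' d' q r : ℕ)
    (hr : r < d) (hqd : d' + r = q * d)
    (hcond : l' + min l r ≤ q * l)
    (pref : Finset α → Finset α → Prop)
    (hmono : ∀ A B : Finset α, B ⊆ A → pref A B) :
    MMSLe pref l d l' d' := by
  obtain ⟨g, hg⟩ := exists_fin_map_mul_card_le_card_preimage_add_min hr hqd
  refine mmsLe_of_le_card_preimage hmono g fun S hS => ?_
  have hcount := hg S
  rw [hS] at hcount
  omega

theorem stmt1 {α : Type} [Fintype α] [DecidableEq α]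
    (l d l' d' q r : ℕ) (hl : 1 ≤ l) (hld : l ≤ d) (hl' : 1 ≤ l') (hld' : l' ≤ d')
    (hq : 1 ≤ q) (hr : r < d) (hqd : d' + r = q * d)
    (hcond : l' + min l r ≤ q * l)
    (pref : Finset α → Finset α → Prop)
    (hmono : ∀ A B : Finset α, B ⊆ A → pref A B)
    (htotal : ∀ A B : Finset α, pref A B ∨ pref B A)
    (htrans : ∀ A B C : Finset α, pref A B → pref B C → pref A C) :
    MMSLe pref l d l' d' :=
  stmt1_general l d l' d' q r hr hqd hcond pref hmono
end

section
/- Let 1 ≤ l ≤ d and 1 ≤ l' ≤ d' be integers, and let q ≥ 1 and 0 ≤ r ≤ d−1 be the unique integers with d' = q·d − r. If q·l − min(l,r) < l', then there exists a finite set X with a monotone total preorder ⪰ on its subsets such that MMS(X,l,d) ≺ MMS(X,l',d'). In particular, one can take X to have d' elements and order subsets by cardinality. -/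
/-! Split a `d'`-element set into singletons, so that every union of `l'` parts has `l'` elements.
Given a partition into `d` parts, choose the `l` smallest parts. If every other part has at
least `q` elements, the chosen ones have at most `q * d - r - (d - l) * q = q * l - r` elements
in total; otherwise some other part has fewer than `q` elements, hence so has every chosen part,
and the total is at most `q * l - l`. Either way it is at most `q * l - min l r < l'`. -/

open Finset

/-- `MMSLt pref l d l' d'` : the `l`-out-of-`d` MMS is strictly worse than the
`l'`-out-of-`d'` MMS: there is a `d'`-partition `Y'` such that for every `d`-partition `Y`,
some `l`-part union of `Y` is strictly below every `l'`-part union of `Y'`. -/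
def MMSLt {α : Type} [Fintype α] [DecidableEq α]
    (pref : Finset α → Finset α → Prop) (l d l' d' : ℕ) : Prop :=
  ∃ Y' : Fin d' → Finset α, IsPartition d' Y' ∧
    ∀ Y : Fin d → Finset α, IsPartition d Y →
      ∃ S : Finset (Fin d), S.card = l ∧
        ∀ S' : Finset (Fin d'), S'.card = l' →
          pref (S'.biUnion Y') (S.biUnion Y) ∧ ¬ pref (S.biUnion Y) (S'.biUnion Y')

theorem Finset.exists_card_eq_forall_le_of_mem_of_notMem {ι β : Type*} [Fintype ι] [LinearOrder β]
    (f : ι → β) {l : ℕ} (hl : l ≤ Fintype.card ι) :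
    ∃ S : Finset ι, S.card = l ∧ ∀ i ∈ S, ∀ j ∉ S, f i ≤ f j := by
  classical
  induction l with
  | zero => exact ⟨∅, rfl, by simp⟩
  | succ l ih =>
    obtain ⟨S, hS, hle⟩ := ih (by omega)
    have hne : Sᶜ.Nonempty := by
      rw [← card_pos, card_compl]
      omega
    obtain ⟨j, hjS, hj⟩ := Sᶜ.exists_min_image f hne
    rw [mem_compl] at hjS
    refine ⟨insert j S, by rw [card_insert_of_notMem hjS, hS], ?_⟩
    intro i hi k hk
    rw [mem_insert, not_or] at hk
    rcases mem_insert.1 hi with rfl | hi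
    · exact hj k (mem_compl.2 hk.2)
    · exact hle i hi k hk.2

theorem exists_card_eq_sum_add_min_le {ι : Type*} [Fintype ι] (a : ι → ℕ) {l q r : ℕ}
    (hl : l ≤ Fintype.card ι) (hsum : ∑ i, a i + r = q * Fintype.card ι) :
    ∃ S : Finset ι, S.card = l ∧ ∑ i ∈ S, a i + min l r ≤ q * l := by
  classical
  obtain ⟨S, hS, hle⟩ := exists_card_eq_forall_le_of_mem_of_notMem a hl
  refine ⟨S, hS, ?_⟩
  by_cases hbig : ∀ j ∉ S, q ≤ a j
  · have hcompl : (Fintype.card ι - l) * q ≤ ∑ j ∈ Sᶜ, a j := by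
      simpa [card_compl, hS] using card_nsmul_le_sum Sᶜ a q fun j hj => hbig j (mem_compl.1 hj)
    have hqd : q * l + (Fintype.card ι - l) * q = q * Fintype.card ι := by
      rw [mul_comm _ q, ← Nat.mul_add, Nat.add_sub_cancel' hl]
    have hsplit := sum_add_sum_compl S a
    have := min_le_right l r
    omega
  · push Not at hbig
    obtain ⟨j, hjS, hj⟩ := hbig
    have hsmall : ∑ i ∈ S, a i + l ≤ q * l := by
      simpa [sum_add_distrib, hS, mul_comm] using
        sum_le_card_nsmul S (a · + 1) q fun i hi => (hle i hi j hjS).trans_lt hj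
    have := min_le_left l r
    omega

theorem IsPartition.card_biUnion {α : Type} [Fintype α] [DecidableEq α] {d : ℕ}
    {Y : Fin d → Finset α} (hY : IsPartition d Y) (S : Finset (Fin d)) :
    (S.biUnion Y).card = ∑ i ∈ S, (Y i).card :=
  Finset.card_biUnion fun i _ j _ h => hY.1 i j h

theorem IsPartition.sum_card {α : Type} [Fintype α] [DecidableEq α] {d : ℕ}
    {Y : Fin d → Finset α} (hY : IsPartition d Y) : ∑ i, (Y i).card = Fintype.card α := by
  rw [← hY.card_biUnion, hY.2, card_univ]

theorem isPartition_singleton (n : ℕ) : IsPartition n fun i : Fin n => {i} :=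
  ⟨fun _ _ h => disjoint_singleton.2 h, biUnion_singleton_eq_self⟩

theorem IsPartition.exists_card_eq_card_biUnion_add_min_le {α : Type} [Fintype α]
    [DecidableEq α] {d : ℕ} {Y : Fin d → Finset α} (hY : IsPartition d Y) {l q r : ℕ}
    (hld : l ≤ d) (hqd : Fintype.card α + r = q * d) :
    ∃ S : Finset (Fin d), S.card = l ∧ (S.biUnion Y).card + min l r ≤ q * l := by
  simp_rw [hY.card_biUnion]
  exact exists_card_eq_sum_add_min_le _ (by simpa using hld) (by simpa [hY.sum_card] using hqd)

theorem stmt2_general (l d l' d' q r : ℕ) (hld : l ≤ d)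
    (hqd : d' + r = q * d)
    (hcond : q * l < l' + min l r) :
    ∃ (α : Type) (iF : Fintype α) (iD : DecidableEq α)
      (pref : Finset α → Finset α → Prop),
      Fintype.card α = d' ∧
      (∀ A B : Finset α, B ⊆ A → pref A B) ∧
      (∀ A B : Finset α, pref A B ∨ pref B A) ∧
      (∀ A B C : Finset α, pref A B → pref B C → pref A C) ∧
      (∀ A B : Finset α, pref A B ↔ B.card ≤ A.card) ∧
      @MMSLt α iF iD pref l d l' d' := by
  refine ⟨Fin d', inferInstance, inferInstance, fun A B => B.card ≤ A.card, Fintype.card_fin d',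
    fun A B h => card_le_card h, fun A B => le_total _ _, fun A B C h₁ h₂ => h₂.trans h₁,
    fun A B => Iff.rfl, fun i => {i}, isPartition_singleton d', fun Y hY => ?_⟩
  obtain ⟨S, hS, hsmall⟩ := hY.exists_card_eq_card_biUnion_add_min_le hld (by simpa using hqd)
  refine ⟨S, hS, fun S' hS' => ?_⟩
  dsimp only
  rw [biUnion_singleton_eq_self, hS']
  omega

theorem stmt2 (l d l' d' q r : ℕ) (hl : 1 ≤ l) (hld : l ≤ d) (hl' : 1 ≤ l') (hld' : l' ≤ d')
    (hq : 1 ≤ q) (hr : r < d) (hqd : d' + r = q * d)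
    (hcond : q * l < l' + min l r) :
    ∃ (α : Type) (iF : Fintype α) (iD : DecidableEq α)
      (pref : Finset α → Finset α → Prop),
      Fintype.card α = d' ∧
      (∀ A B : Finset α, B ⊆ A → pref A B) ∧
      (∀ A B : Finset α, pref A B ∨ pref B A) ∧
      (∀ A B C : Finset α, pref A B → pref B C → pref A C) ∧
      (∀ A B : Finset α, pref A B ↔ B.card ≤ A.card) ∧
      @MMSLt α iF iD pref l d l' d' :=
  stmt2_general l d l' d' q r hld hqd hcond
end

section
/- For integers 1 ≤ l ≤ d and 0 ≤ r < l, the pair (l,d) dominates (l−r, d−r): for every finite set X with a monotone total preorder on subsets, MMS(X,l,d) ⪰ MMS(X,l−r,d−r). -/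
open Finset

/-!
Pad a `(d - r)`-partition with `r` empty parts. Any `l` of the resulting `d` parts include at
least `l - r` of the original ones, whose union is contained in the union of the chosen `l`
parts; monotonicity of the preorder then does the rest.
-/

def padWithEmpty {α : Type} {m : ℕ} (n : ℕ) (Y : Fin m → Finset α) : Fin n → Finset α :=
  fun i => if hi : (i : ℕ) < m then Y ⟨i, hi⟩ else ∅

section

variable {α : Type} {m n : ℕ}

@[simp]
lemma padWithEmpty_castLE (h : m ≤ n) (Y : Fin m → Finset α) (j : Fin m) :
    padWithEmpty n Y (Fin.castLE h j) = Y j := by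
  simp [padWithEmpty]

lemma IsPartition.padWithEmpty [Fintype α] [DecidableEq α] (h : m ≤ n) {Y : Fin m → Finset α}
    (hY : IsPartition m Y) : IsPartition n (padWithEmpty n Y) := by
  refine ⟨fun i j hij => ?_, eq_univ_of_forall fun x => ?_⟩
  · unfold _root_.padWithEmpty
    by_cases hi : (i : ℕ) < m <;> by_cases hj : (j : ℕ) < m <;> simp only [hi, hj, dite_true,
      dite_false, disjoint_empty_left, disjoint_empty_right]
    exact hY.1 _ _ (by simpa [Fin.ext_iff] using hij)
  · obtain ⟨j, -, hx⟩ := mem_biUnion.1 (hY.2 ▸ mem_univ x)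
    exact mem_biUnion.2 ⟨Fin.castLE h j, mem_univ _, by simpa using hx⟩

/-- At most `n - m` indices of `Fin n` lie outside the image of `Fin m`. -/
lemma card_sub_le_card_filter_castLE_mem (h : m ≤ n) (S : Finset (Fin n)) :
    #S - (n - m) ≤ #{j : Fin m | Fin.castLE h j ∈ S} := by
  set T := univ.map (Fin.castLEEmb h)
  have hinter :
      S ∩ T = ({j : Fin m | Fin.castLE h j ∈ S} : Finset (Fin m)).map (Fin.castLEEmb h) := by
    ext i
    simp only [T, mem_inter, mem_map, mem_univ, true_and, mem_filter, Fin.castLEEmb_apply]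
    constructor
    · rintro ⟨hi, j, rfl⟩
      exact ⟨j, hi, rfl⟩
    · rintro ⟨j, hj, rfl⟩
      exact ⟨hj, j, rfl⟩
  have hout : #(S \ T) ≤ n - m :=
    (card_le_card (sdiff_subset_sdiff (subset_univ S) le_rfl)).trans (by simp [T, card_univ_sdiff])
  rw [← card_sdiff_add_card_inter S T, hinter, card_map]
  omega

end

theorem MMSLe.of_le {α : Type} [Fintype α] [DecidableEq α] {pref : Finset α → Finset α → Prop}
    (hmono : ∀ A B : Finset α, B ⊆ A → pref A B) {l l' m n : ℕ} (hmn : m ≤ n)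
    (hl : l' ≤ l - (n - m)) : MMSLe pref l n l' m := by
  intro Y' hY'
  refine ⟨padWithEmpty n Y', hY'.padWithEmpty hmn, fun S hS => ?_⟩
  obtain ⟨S', hS'S, hS'⟩ := exists_subset_card_eq
    (hl.trans (hS ▸ card_sub_le_card_filter_castLE_mem hmn S))
  refine ⟨S', hS', hmono _ _ fun x hx => ?_⟩
  obtain ⟨j, hj, hxj⟩ := mem_biUnion.1 hx
  exact mem_biUnion.2 ⟨Fin.castLE hmn j, (mem_filter.1 (hS'S hj)).2, by simpa using hxj⟩

theorem stmt7_general {α : Type} [Fintype α] [DecidableEq α]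
    (l d r : ℕ)
    (pref : Finset α → Finset α → Prop)
    (hmono : ∀ A B : Finset α, B ⊆ A → pref A B) :

    MMSLe pref l d (l - r) (d - r) :=
  MMSLe.of_le hmono (Nat.sub_le d r) (by omega)

theorem stmt7 {α : Type} [Fintype α] [DecidableEq α]
    (l d r : ℕ) (hl : 1 ≤ l) (hld : l ≤ d) (hrl : r < l)
    (pref : Finset α → Finset α → Prop)
    (hmono : ∀ A B : Finset α, B ⊆ A → pref A B)
    (htotal : ∀ A B : Finset α, pref A B ∨ pref B A)
    (htrans : ∀ A B C : Finset α, pref A B → pref B C → pref A C) :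
    MMSLe pref l d (l - r) (d - r) :=
  stmt7_general l d r pref hmono
end

section
/- For every integers h ≥ 0 and 1 ≤ l ≤ d, if |X| ≤ d, then MMS(X,l,d) ⪰ MMS(X,l+h,d+h). -/
open Finset

/- A `(d + h)`-partition of a set with at most `d` elements has at least `h` empty parts.
Dropping `h` of them leaves a `d`-partition, and any union of `l` of its parts is the union of
the same `l` parts of the original partition together with the `h` dropped empty ones. -/

section Partition

variable {α : Type} [DecidableEq α] {n d : ℕ} {Y : Fin n → Finset α}

lemma card_map_union_compl_map (f : Fin d ↪ Fin n) (S : Finset (Fin d)) :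
    #(S.map f ∪ (univ.map f)ᶜ) = #S + (n - d) := by
  rw [card_union_of_disjoint (disjoint_compl_right.mono_left (map_subset_map.2 (subset_univ S))),
    card_map, card_compl, card_map, card_univ, Fintype.card_fin, Fintype.card_fin]

lemma biUnion_map_union_compl_map (f : Fin d ↪ Fin n) (hf : ∀ i ∉ univ.map f, Y i = ∅)
    (S : Finset (Fin d)) : (S.map f ∪ (univ.map f)ᶜ).biUnion Y = S.biUnion (Y ∘ f) := by
  have hcompl : (univ.map f)ᶜ.biUnion Y = ∅ :=
    eq_empty_of_forall_notMem fun x hx => by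
      obtain ⟨i, hi, hx⟩ := mem_biUnion.1 hx
      simp [hf i (mem_compl.1 hi)] at hx
  rw [union_biUnion, hcompl, union_empty, map_eq_image, image_biUnion]
  rfl

variable [Fintype α]

lemma IsPartition.card_nonempty_le (hY : IsPartition n Y) :
    #{i | (Y i).Nonempty} ≤ Fintype.card α :=
  calc #{i | (Y i).Nonempty}
      ≤ #(({i | (Y i).Nonempty} : Finset (Fin n)).biUnion Y) :=
        card_le_card_biUnion (fun i _ j _ hij => hY.1 i j hij) fun _ hi => (mem_filter.1 hi).2
    _ ≤ Fintype.card α := card_le_univ _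

lemma IsPartition.exists_embedding_of_card_le (hY : IsPartition n Y)
    (hcard : Fintype.card α ≤ d) (hdn : d ≤ n) :
    ∃ f : Fin d ↪ Fin n, ∀ i ∉ univ.map f, Y i = ∅ := by
  obtain ⟨T, hNT, hT⟩ := exists_superset_card_eq ((hY.card_nonempty_le).trans hcard)
    (by simpa using hdn)
  refine ⟨(T.orderEmbOfFin hT).toEmbedding, fun i hi => ?_⟩
  rw [map_orderEmbOfFin_univ] at hi
  simpa [not_nonempty_iff_eq_empty] using mt (@hNT i) hi

lemma IsPartition.comp_embedding (hY : IsPartition n Y) (f : Fin d ↪ Fin n)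
    (hf : ∀ i ∉ univ.map f, Y i = ∅) : IsPartition d (Y ∘ f) := by
  refine ⟨fun i j hij => hY.1 (f i) (f j) (f.injective.ne hij), eq_univ_iff_forall.2 fun x => ?_⟩
  obtain ⟨i, -, hx⟩ := mem_biUnion.1 (hY.2 ▸ mem_univ x : x ∈ univ.biUnion Y)
  by_cases hi : i ∈ univ.map f
  · obtain ⟨j, -, rfl⟩ := mem_map.1 hi
    exact mem_biUnion.2 ⟨j, mem_univ j, hx⟩
  · simp [hf i hi] at hx

end Partition

theorem stmt9_general {α : Type} [Fintype α] [DecidableEq α]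
    (l d h : ℕ) (hcard : Fintype.card α ≤ d)
    (pref : Finset α → Finset α → Prop)
    (hmono : ∀ A B : Finset α, B ⊆ A → pref A B) :
    MMSLe pref l d (l + h) (d + h) := by
  intro Y' hY'
  obtain ⟨f, hf⟩ := hY'.exists_embedding_of_card_le hcard (Nat.le_add_right d h)
  refine ⟨Y' ∘ f, hY'.comp_embedding f hf, fun S hS => ⟨S.map f ∪ (univ.map f)ᶜ, ?_, ?_⟩⟩
  · rw [card_map_union_compl_map, hS, Nat.add_sub_cancel_left]
  · exact hmono _ _ (biUnion_map_union_compl_map f hf S).le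

theorem stmt9 {α : Type} [Fintype α] [DecidableEq α]
    (l d h : ℕ) (hl : 1 ≤ l) (hld : l ≤ d) (hcard : Fintype.card α ≤ d)
    (pref : Finset α → Finset α → Prop)
    (hmono : ∀ A B : Finset α, B ⊆ A → pref A B)
    (htotal : ∀ A B : Finset α, pref A B ∨ pref B A)
    (htrans : ∀ A B C : Finset α, pref A B → pref B C → pref A C) :
    MMSLe pref l d (l + h) (d + h) :=
  stmt9_general l d h hcard pref hmono
end
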